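/- (Abstract coGalois Criterion) Let η : Γ → 𝔊 be a surjective generating cocycle, and call an ideal a of 𝔊 coGalois if the induced triple (Γ, 𝔊/a, η_a) is a coGalois triple. Every ideal maximal (with respect to inclusion) among the non-coGalois ideals of 𝔊 is open, and for every ideal a of 𝔊 the following are equivalent: (1) a is a coGalois ideal; (2) a ⊄ m for every ideal m maximal among the non-coGalois ideals of 𝔊. -/

import Mathlib

/-!
For surjective `η` and `Λ ⊇ η⁻¹(a)`, the ideal `J(Λ)` already contains `a`, so the coGalois
property of `a` can be read in `𝔊` itself: every closed `Λ ⊇ η⁻¹(a)` satisfies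
`η⁻¹(J(Λ)) ⊆ Λ`. In this form it is plainly inherited by every larger ideal. Conversely it
descends from the open ideals above `a` to `a`: a closed `Λ` is the intersection of the open
subgroups `O ⊇ Λ`, and `η⁻¹(a)` is the intersection of the directed family of closed sets
`η⁻¹(b)`, `b ⊇ a` open, so by compactness one `η⁻¹(b)` already lies in `O`. Hence every
non-coGalois ideal lies in an open non-coGalois ideal, above which there are only finitely many
ideals; a maximal one among those is maximal among all non-coGalois ideals, and open.
-/

def IsIdealSG (Γ : Type*) {𝔊 : Type*} [Group 𝔊] [TopologicalSpace 𝔊] [SMul Γ 𝔊]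
    (a : Subgroup 𝔊) : Prop :=
  IsClosed (a : Set 𝔊) ∧ a.Normal ∧ ∀ (γ : Γ) (g : 𝔊), g ∈ a → γ • g ∈ a

def cogalJ (Γ : Type*) {𝔊 : Type*} [Group 𝔊] [TopologicalSpace 𝔊] [SMul Γ 𝔊]
    (η : Γ → 𝔊) (X : Set Γ) : Subgroup 𝔊 :=
  sInf {a : Subgroup 𝔊 | IsIdealSG Γ a ∧ ∀ γ ∈ X, η γ ∈ a}

/-- `(Γ, 𝔊', η')` is a *coGalois triple* if `η'` is surjective and the operators `J'` and
`S'` are mutually inverse between the closed subgroups of `Γ` containing `ker η'` and the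
ideals of `𝔊'`. -/
def IsCoGaloisTriple (Γ : Type*) (𝔊' : Type*) [Group Γ] [TopologicalSpace Γ]
    [Group 𝔊'] [TopologicalSpace 𝔊'] [SMul Γ 𝔊'] (η : Γ → 𝔊') : Prop :=
  Function.Surjective η ∧
  (∀ Λ : Subgroup Γ, IsClosed (Λ : Set Γ) → (∀ γ : Γ, η γ = 1 → γ ∈ Λ) →
      η ⁻¹' ((cogalJ Γ η (Λ : Set Γ) : Subgroup 𝔊') : Set 𝔊') = (Λ : Set Γ)) ∧
  (∀ a : Subgroup 𝔊', IsIdealSG Γ a → cogalJ Γ η (η ⁻¹' (a : Set 𝔊')) = a)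

def quotSMul {Γ 𝔊 : Type*} [Group Γ] [Group 𝔊] [MulDistribMulAction Γ 𝔊]
    (a : Subgroup 𝔊) (hinv : ∀ (γ : Γ) (g : 𝔊), g ∈ a → γ • g ∈ a) :
    SMul Γ (𝔊 ⧸ a) :=
  ⟨fun γ => Quotient.map' (fun g => γ • g) (by
    intro g₁ g₂ h
    rw [QuotientGroup.leftRel_apply] at h ⊢
    have := hinv γ _ h
    rwa [smul_mul', smul_inv'] at this)⟩

/-- An ideal `a` of `𝔊` is a *coGalois ideal* (w.r.t. `η`) if the induced triple
`(Γ, 𝔊/a, η_a)` is a coGalois triple. -/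
def IsCoGaloisIdeal {Γ 𝔊 : Type*} [Group Γ] [TopologicalSpace Γ]
    [Group 𝔊] [TopologicalSpace 𝔊] [MulDistribMulAction Γ 𝔊] (η : Γ → 𝔊)
    (a : Subgroup 𝔊) (hn : a.Normal)
    (hinv : ∀ (γ : Γ) (g : 𝔊), g ∈ a → γ • g ∈ a) : Prop :=
  letI := hn
  letI := quotSMul a hinv
  IsCoGaloisTriple Γ (𝔊 ⧸ a) (fun γ : Γ => (QuotientGroup.mk (η γ) : 𝔊 ⧸ a))

/-- An ideal of `𝔊` maximal (w.r.t. inclusion) among the non-coGalois ideals. -/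
def IsMaxNonCoGaloisIdeal {Γ 𝔊 : Type*} [Group Γ] [TopologicalSpace Γ]
    [Group 𝔊] [TopologicalSpace 𝔊] [MulDistribMulAction Γ 𝔊] (η : Γ → 𝔊)
    (m : Subgroup 𝔊) : Prop :=
  ∃ hm : IsIdealSG Γ m, ¬ IsCoGaloisIdeal η m hm.2.1 hm.2.2 ∧
    ∀ m' : Subgroup 𝔊, ∀ hm' : IsIdealSG Γ m',
      ¬ IsCoGaloisIdeal η m' hm'.2.1 hm'.2.2 → m ≤ m' → m' = m

open Topology

section Ideals

variable {Γ G H : Type*} [Group G] [TopologicalSpace G] [SMul Γ G]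
  [Group H] [TopologicalSpace H] [SMul Γ H]

theorem isIdealSG_top : IsIdealSG Γ (⊤ : Subgroup G) :=
  ⟨by simp, inferInstance, fun _ _ _ => Subgroup.mem_top _⟩

theorem IsIdealSG.inf {a b : Subgroup G} (ha : IsIdealSG Γ a) (hb : IsIdealSG Γ b) :
    IsIdealSG Γ (a ⊓ b) :=
  ⟨ha.1.inter hb.1, @Subgroup.normal_inf_normal _ _ _ _ ha.2.1 hb.2.1,
    fun γ g hg => ⟨ha.2.2 γ g hg.1, hb.2.2 γ g hg.2⟩⟩

theorem IsIdealSG.comap {f : G →* H} (hf : Continuous f)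
    (hfΓ : ∀ (γ : Γ) (g : G), f (γ • g) = γ • f g) {q : Subgroup H} (hq : IsIdealSG Γ q) :
    IsIdealSG Γ (q.comap f) :=
  ⟨hq.1.preimage hf, hq.2.1.comap f, fun γ g hg => by
    rw [Subgroup.mem_comap, hfΓ]
    exact hq.2.2 γ _ hg⟩

theorem IsIdealSG.map {f : G →* H} (hf : IsQuotientMap f)
    (hfΓ : ∀ (γ : Γ) (g : G), f (γ • g) = γ • f g) {b : Subgroup G} (hb : IsIdealSG Γ b)
    (hker : f.ker ≤ b) : IsIdealSG Γ (b.map f) := by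
  refine ⟨?_, hb.2.1.map f hf.surjective, ?_⟩
  · rw [← hf.isCoinducing.isClosed_preimage, ← Subgroup.coe_comap, Subgroup.comap_map_eq,
      sup_eq_left.2 hker]
    exact hb.1
  · rintro γ _ ⟨g, hg, rfl⟩
    exact ⟨γ • g, hb.2.2 γ g hg, hfΓ γ g⟩

end Ideals

section CogalJ

variable {Γ G H : Type*} [Group G] [TopologicalSpace G] [SMul Γ G]
  [Group H] [TopologicalSpace H] [SMul Γ H] {θ : Γ → G} {X Y : Set Γ}

theorem mem_cogalJ_of_mem {γ : Γ} (hγ : γ ∈ X) : θ γ ∈ cogalJ Γ θ X :=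
  Subgroup.mem_sInf.2 fun _ hq => hq.2 γ hγ

theorem subset_preimage_cogalJ : X ⊆ θ ⁻¹' cogalJ Γ θ X :=
  fun _ => mem_cogalJ_of_mem

theorem cogalJ_le {q : Subgroup G} (hq : IsIdealSG Γ q) (h : ∀ γ ∈ X, θ γ ∈ q) :
    cogalJ Γ θ X ≤ q :=
  sInf_le ⟨hq, h⟩

theorem cogalJ_mono (h : X ⊆ Y) : cogalJ Γ θ X ≤ cogalJ Γ θ Y :=
  le_sInf fun _ hq => sInf_le ⟨hq.1, fun γ hγ => hq.2 γ (h hγ)⟩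

theorem isIdealSG_cogalJ (θ : Γ → G) (X : Set Γ) : IsIdealSG Γ (cogalJ Γ θ X) := by
  refine ⟨?_, ⟨fun n hn g => ?_⟩, fun γ g hg => ?_⟩
  · rw [cogalJ, Subgroup.coe_sInf]
    exact isClosed_biInter fun q hq => hq.1.1
  · exact Subgroup.mem_sInf.2 fun q hq => hq.1.2.1.conj_mem n (Subgroup.mem_sInf.1 hn q hq) g
  · exact Subgroup.mem_sInf.2 fun q hq => hq.1.2.2 γ g (Subgroup.mem_sInf.1 hg q hq)

theorem cogalJ_preimage (hθ : Function.Surjective θ) {q : Subgroup G} (hq : IsIdealSG Γ q) :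
    cogalJ Γ θ (θ ⁻¹' q) = q := by
  refine le_antisymm (cogalJ_le hq fun _ => id) fun g hg => ?_
  obtain ⟨γ, rfl⟩ := hθ g
  exact mem_cogalJ_of_mem hg

theorem comap_cogalJ_comp {f : G →* H} (hf : IsQuotientMap f)
    (hfΓ : ∀ (γ : Γ) (g : G), f (γ • g) = γ • f g) (hker : f.ker ≤ cogalJ Γ θ X) :
    (cogalJ Γ (f ∘ θ) X).comap f = cogalJ Γ θ X := by
  refine le_antisymm ?_ (cogalJ_le ((isIdealSG_cogalJ _ X).comap hf.continuous hfΓ)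
    fun γ hγ => mem_cogalJ_of_mem (θ := f ∘ θ) hγ)
  have hmap : cogalJ Γ (f ∘ θ) X ≤ (cogalJ Γ θ X).map f :=
    cogalJ_le ((isIdealSG_cogalJ θ X).map hf hfΓ hker)
      fun γ hγ => Subgroup.mem_map_of_mem f (mem_cogalJ_of_mem hγ)
  calc (cogalJ Γ (f ∘ θ) X).comap f ≤ ((cogalJ Γ θ X).map f).comap f := Subgroup.comap_mono hmap
    _ = cogalJ Γ θ X := by rw [Subgroup.comap_map_eq, sup_eq_left.2 hker]

end CogalJ

theorem isCoGaloisTriple_iff {Γ H : Type*} [Group Γ] [TopologicalSpace Γ] [Group H]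
    [TopologicalSpace H] [SMul Γ H] {θ : Γ → H} (hθ : Function.Surjective θ) :
    IsCoGaloisTriple Γ H θ ↔ ∀ Λ : Subgroup Γ, IsClosed (Λ : Set Γ) →
      (∀ γ : Γ, θ γ = 1 → γ ∈ Λ) → θ ⁻¹' cogalJ Γ θ Λ ⊆ Λ :=
  ⟨fun h Λ hΛ hker => (h.2.1 Λ hΛ hker).subset, fun h =>
    ⟨hθ, fun Λ hΛ hker => (h Λ hΛ hker).antisymm subset_preimage_cogalJ,
      fun _ hq => cogalJ_preimage hθ hq⟩⟩

section CoGaloisIdeal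

variable {Γ 𝔊 : Type*} [Group Γ] [TopologicalSpace Γ] [Group 𝔊] [TopologicalSpace 𝔊]
  [MulDistribMulAction Γ 𝔊] {η : Γ → 𝔊}

/-- For surjective `η` this is the coGalois property of `a`, read in `𝔊` instead of `𝔊 ⧸ a`. -/
def IsSJClosedAbove (η : Γ → 𝔊) (a : Subgroup 𝔊) : Prop :=
  ∀ Λ : Subgroup Γ, IsClosed (Λ : Set Γ) → η ⁻¹' a ⊆ Λ → η ⁻¹' cogalJ Γ η Λ ⊆ Λ

theorem IsSJClosedAbove.mono {a b : Subgroup 𝔊} (ha : IsSJClosedAbove η a) (hab : a ≤ b) :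
    IsSJClosedAbove η b :=
  fun Λ hΛ hbΛ => ha Λ hΛ ((Set.preimage_mono hab).trans hbΛ)

theorem isCoGaloisIdeal_iff_isSJClosedAbove (hsurj : Function.Surjective η) {a : Subgroup 𝔊}
    (ha : IsIdealSG Γ a) : IsCoGaloisIdeal η a ha.2.1 ha.2.2 ↔ IsSJClosedAbove η a := by
  have := ha.2.1
  let := quotSMul a ha.2.2
  have hmk : IsQuotientMap (QuotientGroup.mk' a) := QuotientGroup.isQuotientMap_mk a
  have hmkΓ : ∀ (γ : Γ) (g : 𝔊), QuotientGroup.mk' a (γ • g) = γ • QuotientGroup.mk' a g :=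
    fun _ _ => rfl
  change IsCoGaloisTriple Γ (𝔊 ⧸ a) (QuotientGroup.mk' a ∘ η) ↔ _
  rw [isCoGaloisTriple_iff (hmk.surjective.comp hsurj)]
  refine forall₂_congr fun Λ _ => ?_
  have hker : (∀ γ, (QuotientGroup.mk' a ∘ η) γ = 1 → γ ∈ Λ) ↔ η ⁻¹' a ⊆ Λ := by
    simp only [Function.comp_apply, QuotientGroup.mk'_apply, QuotientGroup.eq_one_iff]
    rfl
  rw [hker]
  refine imp_congr_right fun haΛ => ?_
  have haJ : (QuotientGroup.mk' a).ker ≤ cogalJ Γ η Λ := by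
    rw [QuotientGroup.ker_mk']
    intro g hg
    obtain ⟨γ, rfl⟩ := hsurj g
    exact mem_cogalJ_of_mem (haΛ hg)
  rw [Set.preimage_comp, ← Subgroup.coe_comap, comap_cogalJ_comp hmk hmkΓ haJ]

theorem isMaxNonCoGaloisIdeal_iff (hsurj : Function.Surjective η) {m : Subgroup 𝔊} :
    IsMaxNonCoGaloisIdeal η m ↔ Maximal (fun b => IsIdealSG Γ b ∧ ¬ IsSJClosedAbove η b) m := by
  constructor
  · rintro ⟨hm, hnm, hmax⟩
    refine ⟨⟨hm, (isCoGaloisIdeal_iff_isSJClosedAbove hsurj hm).not.1 hnm⟩,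
      fun c ⟨hc, hnc⟩ hmc => (hmax c hc ?_ hmc).le⟩
    exact (isCoGaloisIdeal_iff_isSJClosedAbove hsurj hc).not.2 hnc
  · rintro ⟨⟨hm, hnm⟩, hmax⟩
    refine ⟨hm, (isCoGaloisIdeal_iff_isSJClosedAbove hsurj hm).not.2 hnm,
      fun c hc hnc hmc => (hmax ⟨hc, ?_⟩ hmc).antisymm hmc⟩
    exact (isCoGaloisIdeal_iff_isSJClosedAbove hsurj hc).not.1 hnc

end CoGaloisIdeal

namespace Subgroup

variable {Γ G : Type*} [Group Γ] [Group G] [MulDistribMulAction Γ G] {N : Subgroup G} {g : G}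

variable (Γ) in
def smulCore (N : Subgroup G) : Subgroup G :=
  ⨅ γ : Γ, N.comap (MulDistribMulAction.toMonoidHom G γ)

theorem mem_smulCore : g ∈ N.smulCore Γ ↔ ∀ γ : Γ, γ • g ∈ N := by
  simp [smulCore, Subgroup.mem_iInf]

theorem smulCore_le : N.smulCore Γ ≤ N :=
  fun g hg => by simpa using mem_smulCore.1 hg 1

theorem smul_mem_smulCore (γ : Γ) (hg : g ∈ N.smulCore Γ) : γ • g ∈ N.smulCore Γ :=
  mem_smulCore.2 fun δ => by simpa [smul_smul] using mem_smulCore.1 hg (δ * γ)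

theorem le_smulCore {K : Subgroup G} (hK : ∀ (γ : Γ) (g : G), g ∈ K → γ • g ∈ K) (hKN : K ≤ N) :
    K ≤ N.smulCore Γ :=
  fun g hg => mem_smulCore.2 fun γ => hKN (hK γ g hg)

theorem Normal.smulCore (hN : N.Normal) : (N.smulCore Γ).Normal :=
  normal_iInf_normal fun _ => hN.comap _

theorem isOpen_smulCore [TopologicalSpace Γ] [CompactSpace Γ] [TopologicalSpace G]
    [ContinuousSMul Γ G] (hN : IsOpen (N : Set G)) : IsOpen (N.smulCore Γ : Set G) := by
  have hcompl : (N.smulCore Γ : Set G)ᶜ = Prod.snd '' {p : Γ × G | p.1 • p.2 ∉ N} := by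
    ext g
    simp [mem_smulCore]
  rw [← isClosed_compl_iff, hcompl]
  exact isClosedMap_snd_of_compactSpace _ (hN.isClosed_compl.preimage continuous_smul)

end Subgroup

section Profinite

variable {Γ 𝔊 : Type*} [Group Γ] [TopologicalSpace Γ] [CompactSpace Γ]
  [Group 𝔊] [TopologicalSpace 𝔊] [IsTopologicalGroup 𝔊] [CompactSpace 𝔊]
  [TotallyDisconnectedSpace 𝔊] [MulDistribMulAction Γ 𝔊] [ContinuousSMul Γ 𝔊]

theorem exists_isOpen_isIdealSG_notMem {a : Subgroup 𝔊} (ha : IsIdealSG Γ a) {x : 𝔊}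
    (hx : x ∉ a) : ∃ b : Subgroup 𝔊, IsIdealSG Γ b ∧ a ≤ b ∧ IsOpen (b : Set 𝔊) ∧ x ∉ b := by
  have ha' := ProfiniteGrp.closedSubgroup_eq_sInf_open ⟨a, ha.1⟩
  change a = _ at ha'
  rw [ha', Subgroup.mem_sInf] at hx
  simp only [not_forall] at hx
  obtain ⟨N, ⟨hNopen, haN⟩, hxN⟩ := hx
  have := N.quotient_finite_of_isOpen hNopen
  have : N.FiniteIndex := Subgroup.finiteIndex_of_finite_quotient
  have hcore_open : IsOpen (N.normalCore : Set 𝔊) :=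
    N.normalCore.isOpen_of_isClosed_of_finiteIndex
      (N.normalCore_isClosed (N.isClosed_of_isOpen hNopen))
  have := ha.2.1
  refine ⟨N.normalCore.smulCore Γ, ⟨?_, (Subgroup.normalCore_normal N).smulCore, ?_⟩,
    Subgroup.le_smulCore ha.2.2 (Subgroup.normal_le_normalCore.2 haN), ?_, ?_⟩
  · exact Subgroup.isClosed_of_isOpen _ (Subgroup.isOpen_smulCore hcore_open)
  · exact fun γ _ => Subgroup.smul_mem_smulCore γ
  · exact Subgroup.isOpen_smulCore hcore_open
  · exact fun hxb => hxN (N.normalCore_le (Subgroup.smulCore_le hxb))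

theorem exists_isOpen_isIdealSG_preimage_subset {η : Γ → 𝔊} (hη : Continuous η)
    {a : Subgroup 𝔊} (ha : IsIdealSG Γ a) {O : Set Γ} (hO : IsOpen O) (haO : η ⁻¹' a ⊆ O) :
    ∃ b : Subgroup 𝔊, IsIdealSG Γ b ∧ a ≤ b ∧ IsOpen (b : Set 𝔊) ∧ η ⁻¹' b ⊆ O := by
  let ι := {b : Subgroup 𝔊 // IsIdealSG Γ b ∧ a ≤ b ∧ IsOpen (b : Set 𝔊)}
  have : Nonempty ι := ⟨⟨⊤, isIdealSG_top, le_top, by simp⟩⟩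
  have hinter : Oᶜ ∩ ⋂ b : ι, η ⁻¹' b.1 = ∅ := by
    refine Set.eq_empty_of_forall_notMem fun γ ⟨hγO, hγ⟩ => hγO (haO ?_)
    by_contra hγa
    obtain ⟨b, hb, hab, hbo, hγb⟩ := exists_isOpen_isIdealSG_notMem ha hγa
    exact hγb (Set.mem_iInter.1 hγ ⟨b, hb, hab, hbo⟩)
  have hdir : Directed (· ⊇ ·) fun b : ι => η ⁻¹' b.1 := fun b c =>
    ⟨⟨b.1 ⊓ c.1, b.2.1.inf c.2.1, le_inf b.2.2.1 c.2.2.1, b.2.2.2.inter c.2.2.2⟩,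
      Set.preimage_mono inf_le_left, Set.preimage_mono inf_le_right⟩
  obtain ⟨⟨b, hb, hab, hbo⟩, hbO⟩ := hO.isClosed_compl.isCompact.elim_directed_family_closed _
    (fun b => b.2.1.1.preimage hη) hinter hdir
  exact ⟨b, hb, hab, hbo, fun γ hγ => by_contra fun hγO => hbO.subset ⟨hγO, hγ⟩⟩

end Profinite

theorem Subgroup.finite_setOf_le {G : Type*} [Group G] (N : Subgroup G) [N.Normal]
    [Finite (G ⧸ N)] : {H : Subgroup G | N ≤ H}.Finite :=
  have : Finite (Subgroup (G ⧸ N)) := Finite.of_injective _ SetLike.coe_injective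
  Set.finite_coe_iff.1 (Finite.of_equiv _ (QuotientGroup.comapMk'OrderIso N).toEquiv)

section Criterion

variable {Γ 𝔊 : Type*} [Group Γ] [TopologicalSpace Γ] [IsTopologicalGroup Γ] [CompactSpace Γ]
  [TotallyDisconnectedSpace Γ]
  [Group 𝔊] [TopologicalSpace 𝔊] [IsTopologicalGroup 𝔊] [CompactSpace 𝔊]
  [TotallyDisconnectedSpace 𝔊] [MulDistribMulAction Γ 𝔊] [ContinuousSMul Γ 𝔊] {η : Γ → 𝔊}

theorem IsSJClosedAbove.of_forall_isOpen (hη : Continuous η) {a : Subgroup 𝔊}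
    (ha : IsIdealSG Γ a) (h : ∀ b : Subgroup 𝔊, IsIdealSG Γ b → a ≤ b → IsOpen (b : Set 𝔊) →
      IsSJClosedAbove η b) : IsSJClosedAbove η a := by
  intro Λ hΛ haΛ γ hγ
  have hΛ' := ProfiniteGrp.closedSubgroup_eq_sInf_open ⟨Λ, hΛ⟩
  change Λ = _ at hΛ'
  rw [SetLike.mem_coe, hΛ', Subgroup.mem_sInf]
  rintro O ⟨hO, hΛO⟩
  obtain ⟨b, hb, hab, hbo, hbO⟩ :=
    exists_isOpen_isIdealSG_preimage_subset hη ha hO (haΛ.trans hΛO)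
  exact h b hb hab hbo O (O.isClosed_of_isOpen hO) hbO (cogalJ_mono hΛO hγ)

theorem exists_le_isOpen_maximal_not_isSJClosedAbove (hη : Continuous η) {a : Subgroup 𝔊}
    (ha : IsIdealSG Γ a) (hna : ¬ IsSJClosedAbove η a) :
    ∃ m : Subgroup 𝔊, a ≤ m ∧ IsOpen (m : Set 𝔊) ∧
      Maximal (fun b => IsIdealSG Γ b ∧ ¬ IsSJClosedAbove η b) m := by
  obtain ⟨b, hb, hab, hbo, hnb⟩ : ∃ b : Subgroup 𝔊, IsIdealSG Γ b ∧ a ≤ b ∧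
      IsOpen (b : Set 𝔊) ∧ ¬ IsSJClosedAbove η b := by
    by_contra! h
    exact hna (.of_forall_isOpen hη ha h)
  have := hb.2.1
  have := b.quotient_finite_of_isOpen hbo
  let s := {c : Subgroup 𝔊 | b ≤ c ∧ IsIdealSG Γ c ∧ ¬ IsSJClosedAbove η c}
  obtain ⟨m, hbm, hm⟩ := ((b.finite_setOf_le).subset fun c hc => hc.1).exists_le_maximal
    (show b ∈ s from ⟨le_rfl, hb, hnb⟩)
  refine ⟨m, hab.trans hbm, Subgroup.isOpen_mono hbm hbo, hm.prop.2, fun c hc hmc => ?_⟩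
  exact hm.2 ⟨hbm.trans hmc, hc⟩ hmc

end Criterion

theorem abstract_coGalois_criterion_general
    {Γ 𝔊 : Type*} [Group Γ] [TopologicalSpace Γ] [IsTopologicalGroup Γ]
    [CompactSpace Γ] [TotallyDisconnectedSpace Γ]
    [Group 𝔊] [TopologicalSpace 𝔊] [IsTopologicalGroup 𝔊]
    [CompactSpace 𝔊] [TotallyDisconnectedSpace 𝔊]
    [MulDistribMulAction Γ 𝔊] [ContinuousSMul Γ 𝔊]
    (η : Γ → 𝔊) (hcont : Continuous η)
    (hsurj : Function.Surjective η) :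
    (∀ m : Subgroup 𝔊, IsMaxNonCoGaloisIdeal η m → IsOpen (m : Set 𝔊)) ∧
    (∀ a : Subgroup 𝔊, ∀ ha : IsIdealSG Γ a,
      (IsCoGaloisIdeal η a ha.2.1 ha.2.2 ↔
        ∀ m : Subgroup 𝔊, IsMaxNonCoGaloisIdeal η m → ¬ a ≤ m)) := by
  simp only [isMaxNonCoGaloisIdeal_iff hsurj]
  refine ⟨fun m hm => ?_, fun a ha => ?_⟩
  · obtain ⟨m', hmm', hm'open, hm'⟩ :=
      exists_le_isOpen_maximal_not_isSJClosedAbove hcont hm.prop.1 hm.prop.2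
    rwa [hm.eq_of_le hm'.prop hmm']
  · rw [isCoGaloisIdeal_iff_isSJClosedAbove hsurj ha]
    refine ⟨fun h m hm ham => hm.prop.2 (h.mono ham), fun h => by_contra fun hna => ?_⟩
    obtain ⟨m, ham, -, hm⟩ := exists_le_isOpen_maximal_not_isSJClosedAbove hcont ha hna
    exact h m hm ham

/-- **Abstract coGalois criterion.**  For a surjective generating cocycle `η : Γ → 𝔊`, every
ideal of `𝔊` maximal among the non-coGalois ideals is open, and an ideal `a` of `𝔊` is a
coGalois ideal if and only if `a` is not contained in any such maximal non-coGalois ideal. -/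
theorem abstract_coGalois_criterion
    {Γ 𝔊 : Type*} [Group Γ] [TopologicalSpace Γ] [IsTopologicalGroup Γ]
    [CompactSpace Γ] [T2Space Γ] [TotallyDisconnectedSpace Γ]
    [Group 𝔊] [TopologicalSpace 𝔊] [IsTopologicalGroup 𝔊]
    [CompactSpace 𝔊] [T2Space 𝔊] [TotallyDisconnectedSpace 𝔊]
    [MulDistribMulAction Γ 𝔊] [ContinuousSMul Γ 𝔊]
    (η : Γ → 𝔊) (hcont : Continuous η)
    (hcoc : ∀ σ τ : Γ, η (σ * τ) = η σ * σ • η τ)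
    (hgen : (Subgroup.closure (Set.range η)).topologicalClosure = ⊤)
    (hsurj : Function.Surjective η) :
    (∀ m : Subgroup 𝔊, IsMaxNonCoGaloisIdeal η m → IsOpen (m : Set 𝔊)) ∧
    (∀ a : Subgroup 𝔊, ∀ ha : IsIdealSG Γ a,
      (IsCoGaloisIdeal η a ha.2.1 ha.2.2 ↔
        ∀ m : Subgroup 𝔊, IsMaxNonCoGaloisIdeal η m → ¬ a ≤ m)) :=
  abstract_coGalois_criterion_general η hcont hsurj
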